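/- For any instance of the charging game and any uniform price profile (p_t = c for all t), there exists a Nash equilibrium s whose welfare W(s) equals the maximum welfare over all strategy profiles; i.e., the price of stability for uniform prices (and hence for the whole charging game) is 1. -/

import Mathlib

/-!
Formalization of the charging game on capacitated energy networks.

An instance consists of a finite directed host graph `H = (V, E)`, `T` time steps
(with per-time-step edge capacities `κE` and demands `d`), and a finite set `B` of
battery agents, each located at a node `loc b`, with battery edges `(b_t, b_{t+1})`
of capacity `κB b t`.
-/

structure ChargingGame where
  /-- households/vertices of the host graph -/
  V : Type
  fintypeV : Fintype V
  decV : DecidableEq V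
  /-- number of time steps (time steps are indexed by `Fin T`) -/
  T : ℕ
  T_pos : 0 < T
  /-- directed edges (power lines) of the host graph -/
  E : Finset (V × V)
  /-- capacity of (the copy of) edge `e` in time step `t` -/
  κE : Fin T → V × V → ℝ
  κE_nonneg : ∀ t e, 0 ≤ κE t e
  /-- demand/supply of node `v` in time step `t` (positive = supply, negative = demand) -/
  d : Fin T → V → ℝ
  /-- the battery agents -/
  B : Type
  fintypeB : Fintype B
  decB : DecidableEq B
  /-- the location of agent `b` -/
  loc : B → V
  /-- capacity of the battery edge `(b_t, b_{t+1})` (only `t` with `t+1 < T` is relevant) -/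
  κB : B → Fin T → ℝ
  κB_nonneg : ∀ b t, 0 ≤ κB b t

attribute [instance] ChargingGame.fintypeV ChargingGame.decV
attribute [instance] ChargingGame.fintypeB ChargingGame.decB

namespace ChargingGame

variable (G : ChargingGame)

/-- Nodes of the time-expanded energy network graph `G`:
grid nodes `(t, v)`, battery nodes `(t, b)`, and `false` = source `x`, `true` = sink `y`. -/
abbrev Node : Type := (Fin G.T × G.V) ⊕ ((Fin G.T × G.B) ⊕ Bool)

/-- the source `x` -/
abbrev source : G.Node := Sum.inr (Sum.inr false)

/-- the sink `y` -/
abbrev sink : G.Node := Sum.inr (Sum.inr true)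

/-- the copy of household node `v` in time step `t` -/
abbrev gridNode (t : Fin G.T) (v : G.V) : G.Node := Sum.inl (t, v)

/-- the battery node `b_t` of agent `b` in time step `t` -/
abbrev batNode (t : Fin G.T) (b : G.B) : G.Node := Sum.inr (Sum.inl (t, b))

/-- The capacities of the graph `G_s` induced by a strategy profile
`s : B → Fin T → ℝ` (`s b t > 0` means agent `b` charges `s b t` in step `t`,
`s b t < 0` means she discharges `-(s b t)`).  Non-edges have capacity `0`. -/
def cap (s : G.B → Fin G.T → ℝ) : G.Node → G.Node → ℝ
  | Sum.inl (t, v), Sum.inl (t', v') =>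
      if t = t' ∧ (v, v') ∈ G.E then G.κE t (v, v') else 0
  | Sum.inl (t, v), Sum.inr (Sum.inl (t', b)) =>
      if t = t' ∧ G.loc b = v then max 0 (s b t') else 0
  | Sum.inr (Sum.inl (t, b)), Sum.inl (t', v) =>
      if t = t' ∧ G.loc b = v then max 0 (-(s b t)) else 0
  | Sum.inr (Sum.inl (t, b)), Sum.inr (Sum.inl (t', b')) =>
      if b = b' ∧ (t' : ℕ) = (t : ℕ) + 1 then G.κB b t else 0
  | Sum.inr (Sum.inr false), Sum.inl (t, v) => max 0 (G.d t v)
  | Sum.inl (t, v), Sum.inr (Sum.inr true) => max 0 (-(G.d t v))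
  | _, _ => 0

/-- A feasible flow on the node set of `G` with capacities `c`. -/
structure IsFlow (c : G.Node → G.Node → ℝ) (f : G.Node → G.Node → ℝ) : Prop where
  nonneg : ∀ u v, 0 ≤ f u v
  le_cap : ∀ u v, f u v ≤ c u v
  conserve : ∀ n, n ≠ G.source → n ≠ G.sink → (∑ u, f u n) = (∑ w, f n w)

/-- The value `|f|` of a flow: total flow leaving the source. -/
def value (f : G.Node → G.Node → ℝ) : ℝ := ∑ v, f G.source v

/-- `f` is a maximum flow for capacities `c`. -/
def IsMaxFlow (c : G.Node → G.Node → ℝ) (f : G.Node → G.Node → ℝ) : Prop :=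
  G.IsFlow c f ∧ ∀ g, G.IsFlow c g → G.value g ≤ G.value f

/-- Agent `b`'s strategy is admissible for the profile `s`:
every maximum flow in `G_s` saturates both transaction edges of `b` in every time step. -/
def Admissible (s : G.B → Fin G.T → ℝ) (b : G.B) : Prop :=
  ∀ f, G.IsMaxFlow (G.cap s) f → ∀ t : Fin G.T,
    f (G.gridNode t (G.loc b)) (G.batNode t b)
        = G.cap s (G.gridNode t (G.loc b)) (G.batNode t b) ∧
    f (G.batNode t b) (G.gridNode t (G.loc b))
        = G.cap s (G.batNode t b) (G.gridNode t (G.loc b))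

/-- A valid strategy of agent `b`: all prefix sums lie between `0` and the battery
capacity (for every `t` with `t + 1 < T`, i.e. `t ∈ [T-1]` in 1-based indexing). -/
def ValidStrategy (b : G.B) (sb : Fin G.T → ℝ) : Prop :=
  ∀ t : Fin G.T, (t : ℕ) + 1 < G.T →
    0 ≤ (∑ z ∈ Finset.Iic t, sb z) ∧ (∑ z ∈ Finset.Iic t, sb z) ≤ G.κB b t

/-- A valid strategy profile. -/
def ValidProfile (s : G.B → Fin G.T → ℝ) : Prop := ∀ b, G.ValidStrategy b (s b)

open scoped Classical in
/-- The utility of agent `b` under price profile `p` and strategy profile `s`: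
`-∑ t, s b t * p t` if `b`'s strategy is admissible, and `-∞` otherwise. -/
noncomputable def utility (p : Fin G.T → ℝ) (s : G.B → Fin G.T → ℝ) (b : G.B) : EReal :=
  if G.Admissible s b then ((-(∑ t, s b t * p t) : ℝ) : EReal) else ⊥

/-- `s` is a (pure) Nash equilibrium for the price profile `p`. -/
def IsNash (p : Fin G.T → ℝ) (s : G.B → Fin G.T → ℝ) : Prop :=
  G.ValidProfile s ∧
  ∀ b (sb' : Fin G.T → ℝ), G.ValidStrategy b sb' →
    ¬ G.utility p s b < G.utility p (Function.update s b sb') b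

/-- `s` is a `k`-strong equilibrium for the price profile `p`: no nonempty coalition of
at most `k` agents has a joint deviation strictly improving the utility of each member. -/
def IsStrongEq (k : ℕ) (p : Fin G.T → ℝ) (s : G.B → Fin G.T → ℝ) : Prop :=
  G.ValidProfile s ∧
  ∀ C : Finset G.B, C.Nonempty → C.card ≤ k →
    ∀ s' : G.B → Fin G.T → ℝ, (∀ b, G.ValidStrategy b (s' b)) →
      (∀ b ∉ C, s' b = s b) →
      ¬ ∀ b ∈ C, G.utility p s b < G.utility p s' b

/-- The welfare `W(s)` of a strategy profile `s`: the value of a maximum flow in `G_s`. -/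
noncomputable def welfare (s : G.B → Fin G.T → ℝ) : ℝ :=
  sSup {r | ∃ f, G.IsFlow (G.cap s) f ∧ G.value f = r}

/-- The maximum welfare over all (valid) strategy profiles. -/
noncomputable def optWelfare : ℝ :=
  sSup {r | ∃ s, G.ValidProfile s ∧ G.welfare s = r}

end ChargingGame
namespace ChargingGame

variable (G : ChargingGame)

/-- flow on the charging transaction edge of `b` at time `t` -/
def cin (f : G.Node → G.Node → ℝ) (b : G.B) (t : Fin G.T) : ℝ :=
  f (G.gridNode t (G.loc b)) (G.batNode t b)

/-- flow on the discharging transaction edge of `b` at time `t` -/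
def cout (f : G.Node → G.Node → ℝ) (b : G.B) (t : Fin G.T) : ℝ :=
  f (G.batNode t b) (G.gridNode t (G.loc b))

/-- flow on the battery edge `(b_t, b_{t+1})` -/
noncomputable def chain (f : G.Node → G.Node → ℝ) (b : G.B) (t : Fin G.T) : ℝ :=
  if h : (t : ℕ) + 1 < G.T then f (G.batNode t b) (G.batNode ⟨(t : ℕ) + 1, h⟩ b) else 0

/-- total flow on transaction edges -/
def trans (f : G.Node → G.Node → ℝ) : ℝ :=
  ∑ b, ∑ t, (G.cin f b t + G.cout f b t)

noncomputable def Mbig : ℝ := (∑ b, ∑ t, G.κB b t) + 1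

/-- the relaxed network: transaction edges have large capacity `Mbig` -/
noncomputable def rcap : G.Node → G.Node → ℝ
  | Sum.inl (t, v), Sum.inl (t', v') =>
      if t = t' ∧ (v, v') ∈ G.E then G.κE t (v, v') else 0
  | Sum.inl (t, v), Sum.inr (Sum.inl (t', b)) =>
      if t = t' ∧ G.loc b = v then G.Mbig else 0
  | Sum.inr (Sum.inl (t, b)), Sum.inl (t', v) =>
      if t = t' ∧ G.loc b = v then G.Mbig else 0
  | Sum.inr (Sum.inl (t, b)), Sum.inr (Sum.inl (t', b')) =>
      if b = b' ∧ (t' : ℕ) = (t : ℕ) + 1 then G.κB b t else 0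
  | Sum.inr (Sum.inr false), Sum.inl (t, v) => max 0 (G.d t v)
  | Sum.inl (t, v), Sum.inr (Sum.inr true) => max 0 (-(G.d t v))
  | _, _ => 0

/-- structural properties of a capacity function around battery nodes -/
structure GoodCap (c : G.Node → G.Node → ℝ) : Prop where
  nonneg : ∀ u v, 0 ≤ c u v
  into : ∀ (t : Fin G.T) (b : G.B) (u : G.Node), c u (G.batNode t b) ≠ 0 →
      u = G.gridNode t (G.loc b) ∨ ∃ t' : Fin G.T, (t : ℕ) = (t' : ℕ) + 1 ∧ u = G.batNode t' b
  outof : ∀ (t : Fin G.T) (b : G.B) (w : G.Node), c (G.batNode t b) w ≠ 0 →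
      w = G.gridNode t (G.loc b) ∨ ∃ t' : Fin G.T, (t' : ℕ) = (t : ℕ) + 1 ∧ w = G.batNode t' b
  chain_le : ∀ (t t' : Fin G.T) (b : G.B), c (G.batNode t b) (G.batNode t' b) ≤ G.κB b t

lemma goodCap_cap (s : G.B → Fin G.T → ℝ) : G.GoodCap (G.cap s) := by
  constructor
  · rintro (⟨t, v⟩ | ⟨⟨t, b⟩ | (_|_)⟩) (⟨t', v'⟩ | ⟨⟨t', b'⟩ | (_|_)⟩) <;>
      simp only [cap] <;>
      first
        | exact le_refl 0
        | exact le_max_left _ _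
        | (split_ifs <;>
            first
              | exact le_refl 0
              | exact G.κE_nonneg _ _
              | exact G.κB_nonneg _ _
              | exact le_max_left _ _)
  · rintro t b (⟨t', v'⟩ | ⟨⟨t', b'⟩ | (_|_)⟩) h <;> simp only [cap] at h
    · left
      rcases (by split_ifs at h with hc; exacts [hc, absurd rfl h] :
        t' = t ∧ G.loc b = v') with ⟨h1, h2⟩
      rw [gridNode, h1, h2]
    · right
      rcases (by split_ifs at h with hc; exacts [hc, absurd rfl h] :
        b' = b ∧ (t : ℕ) = (t' : ℕ) + 1) with ⟨h1, h2⟩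
      exact ⟨t', h2, by rw [batNode, h1]⟩
    · exact absurd rfl h
    · exact absurd rfl h
  · rintro t b (⟨t', v'⟩ | ⟨⟨t', b'⟩ | (_|_)⟩) h <;> simp only [cap] at h
    · left
      rcases (by split_ifs at h with hc; exacts [hc, absurd rfl h] :
        t = t' ∧ G.loc b = v') with ⟨h1, h2⟩
      rw [gridNode, ← h1, h2]
    · right
      rcases (by split_ifs at h with hc; exacts [hc, absurd rfl h] :
        b = b' ∧ (t' : ℕ) = (t : ℕ) + 1) with ⟨h1, h2⟩
      exact ⟨t', h2, by rw [batNode, h1]⟩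
    · exact absurd rfl h
    · exact absurd rfl h
  · intro t t' b
    simp only [batNode, cap]
    split_ifs
    · exact le_refl _
    · exact G.κB_nonneg _ _

lemma Mbig_nonneg : 0 ≤ G.Mbig := by
  have : (0:ℝ) ≤ ∑ b, ∑ t, G.κB b t :=
    Finset.sum_nonneg fun b _ => Finset.sum_nonneg fun t _ => G.κB_nonneg b t
  unfold Mbig; linarith

lemma κB_le_Mbig (b : G.B) (t : Fin G.T) : G.κB b t ≤ G.Mbig := by
  have h1 : G.κB b t ≤ ∑ t', G.κB b t' :=
    Finset.single_le_sum (fun t' _ => G.κB_nonneg b t') (Finset.mem_univ t)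
  have h2 : (∑ t', G.κB b t') ≤ ∑ b', ∑ t', G.κB b' t' :=
    Finset.single_le_sum (f := fun b' => ∑ t', G.κB b' t')
      (fun b' _ => Finset.sum_nonneg fun t' _ => G.κB_nonneg b' t') (Finset.mem_univ b)
  unfold Mbig; linarith

lemma goodCap_rcap : G.GoodCap G.rcap := by
  constructor
  · rintro (⟨t, v⟩ | ⟨⟨t, b⟩ | (_|_)⟩) (⟨t', v'⟩ | ⟨⟨t', b'⟩ | (_|_)⟩) <;>
      simp only [rcap] <;>
      first
        | exact le_refl 0
        | exact le_max_left _ _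
        | (split_ifs <;>
            first
              | exact le_refl 0
              | exact G.κE_nonneg _ _
              | exact G.κB_nonneg _ _
              | exact G.Mbig_nonneg
              | exact le_max_left _ _)
  · rintro t b (⟨t', v'⟩ | ⟨⟨t', b'⟩ | (_|_)⟩) h <;> simp only [rcap] at h
    · left
      rcases (by split_ifs at h with hc; exacts [hc, absurd rfl h] :
        t' = t ∧ G.loc b = v') with ⟨h1, h2⟩
      rw [gridNode, h1, h2]
    · right
      rcases (by split_ifs at h with hc; exacts [hc, absurd rfl h] :
        b' = b ∧ (t : ℕ) = (t' : ℕ) + 1) with ⟨h1, h2⟩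
      exact ⟨t', h2, by rw [batNode, h1]⟩
    · exact absurd rfl h
    · exact absurd rfl h
  · rintro t b (⟨t', v'⟩ | ⟨⟨t', b'⟩ | (_|_)⟩) h <;> simp only [rcap] at h
    · left
      rcases (by split_ifs at h with hc; exacts [hc, absurd rfl h] :
        t = t' ∧ G.loc b = v') with ⟨h1, h2⟩
      rw [gridNode, ← h1, h2]
    · right
      rcases (by split_ifs at h with hc; exacts [hc, absurd rfl h] :
        b = b' ∧ (t' : ℕ) = (t : ℕ) + 1) with ⟨h1, h2⟩
      exact ⟨t', h2, by rw [batNode, h1]⟩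
    · exact absurd rfl h
    · exact absurd rfl h
  · intro t t' b
    simp only [batNode, rcap]
    split_ifs
    · exact le_refl _
    · exact G.κB_nonneg _ _

end ChargingGame
namespace ChargingGame

variable (G : ChargingGame)

lemma flow_zero {c f : G.Node → G.Node → ℝ} (hf : G.IsFlow c f) {u v : G.Node}
    (h : c u v = 0) : f u v = 0 :=
  le_antisymm (h ▸ hf.le_cap u v) (hf.nonneg u v)

lemma gridNode_ne_batNode (t t' : Fin G.T) (v : G.V) (b : G.B) :
    G.gridNode t v ≠ G.batNode t' b := by simp [gridNode, batNode]

lemma batNode_inj {t t' : Fin G.T} {b b' : G.B} (h : G.batNode t b = G.batNode t' b') :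
    t = t' ∧ b = b' := by
  simpa [batNode, Prod.ext_iff] using h

lemma into_sum_zero {c f : G.Node → G.Node → ℝ} (hc : G.GoodCap c) (hf : G.IsFlow c f)
    (b : G.B) (t : Fin G.T) (ht : (t : ℕ) = 0) :
    (∑ u, f u (G.batNode t b)) = G.cin f b t := by
  rw [cin, ← Finset.sum_subset (Finset.subset_univ {G.gridNode t (G.loc b)})]
  · exact Finset.sum_singleton _ _
  · intro u _ hu
    simp only [Finset.mem_singleton] at hu
    by_contra hne
    have hcz : c u (G.batNode t b) ≠ 0 := fun h0 => hne (G.flow_zero hf h0)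
    rcases hc.into t b u hcz with h | ⟨t', h1, _⟩
    · exact hu h
    · omega

lemma into_sum_succ {c f : G.Node → G.Node → ℝ} (hc : G.GoodCap c) (hf : G.IsFlow c f)
    (b : G.B) (t t' : Fin G.T) (ht : (t' : ℕ) = (t : ℕ) + 1) :
    (∑ u, f u (G.batNode t' b)) = G.cin f b t' + f (G.batNode t b) (G.batNode t' b) := by
  rw [cin, ← Finset.sum_subset (Finset.subset_univ {G.gridNode t' (G.loc b), G.batNode t b})]
  · exact Finset.sum_pair (G.gridNode_ne_batNode t' t (G.loc b) b)
  · intro u _ hu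
    simp only [Finset.mem_insert, Finset.mem_singleton, not_or] at hu
    by_contra hne
    have hcz : c u (G.batNode t' b) ≠ 0 := fun h0 => hne (G.flow_zero hf h0)
    rcases hc.into t' b u hcz with h | ⟨t'', h1, h2⟩
    · exact hu.1 h
    · have : t'' = t := Fin.ext (by omega)
      exact hu.2 (this ▸ h2)

lemma out_sum_top {c f : G.Node → G.Node → ℝ} (hc : G.GoodCap c) (hf : G.IsFlow c f)
    (b : G.B) (t : Fin G.T) (ht : ¬ ((t : ℕ) + 1 < G.T)) :
    (∑ w, f (G.batNode t b) w) = G.cout f b t := by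
  rw [cout, ← Finset.sum_subset (Finset.subset_univ {G.gridNode t (G.loc b)})]
  · exact Finset.sum_singleton _ _
  · intro w _ hw
    simp only [Finset.mem_singleton] at hw
    by_contra hne
    have hcz : c (G.batNode t b) w ≠ 0 := fun h0 => hne (G.flow_zero hf h0)
    rcases hc.outof t b w hcz with h | ⟨t', h1, _⟩
    · exact hw h
    · exact ht (h1 ▸ t'.isLt)

lemma out_sum_succ {c f : G.Node → G.Node → ℝ} (hc : G.GoodCap c) (hf : G.IsFlow c f)
    (b : G.B) (t t' : Fin G.T) (ht : (t' : ℕ) = (t : ℕ) + 1) :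
    (∑ w, f (G.batNode t b) w) = G.cout f b t + f (G.batNode t b) (G.batNode t' b) := by
  rw [cout, ← Finset.sum_subset (Finset.subset_univ {G.gridNode t (G.loc b), G.batNode t' b})]
  · exact Finset.sum_pair (G.gridNode_ne_batNode t t' (G.loc b) b)
  · intro w _ hw
    simp only [Finset.mem_insert, Finset.mem_singleton, not_or] at hw
    by_contra hne
    have hcz : c (G.batNode t b) w ≠ 0 := fun h0 => hne (G.flow_zero hf h0)
    rcases hc.outof t b w hcz with h | ⟨t'', h1, h2⟩
    · exact hw.1 h
    · have : t'' = t' := Fin.ext (by omega)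
      exact hw.2 (this ▸ h2)

lemma out_sum_chain {c f : G.Node → G.Node → ℝ} (hc : G.GoodCap c) (hf : G.IsFlow c f)
    (b : G.B) (t : Fin G.T) :
    (∑ w, f (G.batNode t b) w) = G.cout f b t + G.chain f b t := by
  by_cases h : (t : ℕ) + 1 < G.T
  · rw [chain, dif_pos h, out_sum_succ G hc hf b t ⟨(t : ℕ) + 1, h⟩ rfl]
  · rw [chain, dif_neg h, out_sum_top G hc hf b t h, add_zero]

lemma batNode_ne_source (t : Fin G.T) (b : G.B) : G.batNode t b ≠ G.source := by
  simp [batNode, source]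

lemma batNode_ne_sink (t : Fin G.T) (b : G.B) : G.batNode t b ≠ G.sink := by
  simp [batNode, sink]

/-- conservation at the first battery node -/
lemma cons_zero {c f : G.Node → G.Node → ℝ} (hc : G.GoodCap c) (hf : G.IsFlow c f)
    (b : G.B) (t : Fin G.T) (ht : (t : ℕ) = 0) :
    G.cin f b t = G.cout f b t + G.chain f b t := by
  rw [← into_sum_zero G hc hf b t ht, ← out_sum_chain G hc hf b t]
  exact hf.conserve _ (G.batNode_ne_source t b) (G.batNode_ne_sink t b)

/-- conservation at a successor battery node -/
lemma cons_succ {c f : G.Node → G.Node → ℝ} (hc : G.GoodCap c) (hf : G.IsFlow c f)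
    (b : G.B) (t t' : Fin G.T) (ht : (t' : ℕ) = (t : ℕ) + 1) :
    G.cin f b t' + G.chain f b t = G.cout f b t' + G.chain f b t' := by
  have h1 := hf.conserve _ (G.batNode_ne_source t' b) (G.batNode_ne_sink t' b)
  rw [into_sum_succ G hc hf b t t' ht, out_sum_chain G hc hf b t'] at h1
  have hchain : G.chain f b t = f (G.batNode t b) (G.batNode t' b) := by
    have hlt : (t : ℕ) + 1 < G.T := ht ▸ t'.isLt
    have htt : t' = (⟨(t : ℕ) + 1, hlt⟩ : Fin G.T) := by apply Fin.ext; exact ht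
    rw [chain, dif_pos hlt, ← htt]
  rw [hchain]
  exact h1

lemma chain_nonneg {c f : G.Node → G.Node → ℝ} (hf : G.IsFlow c f)
    (b : G.B) (t : Fin G.T) : 0 ≤ G.chain f b t := by
  rw [chain]; split_ifs with h
  · exact hf.nonneg _ _
  · exact le_refl 0

lemma chain_le_κB {c f : G.Node → G.Node → ℝ} (hc : G.GoodCap c) (hf : G.IsFlow c f)
    (b : G.B) (t : Fin G.T) : G.chain f b t ≤ G.κB b t := by
  rw [chain]; split_ifs with h
  · exact le_trans (hf.le_cap _ _) (hc.chain_le t _ b)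
  · exact G.κB_nonneg b t

/-- prefix-sum identity: stored charge after step `t` equals flow on the chain edge -/
lemma prefix_eq_chain {c f : G.Node → G.Node → ℝ} (hc : G.GoodCap c) (hf : G.IsFlow c f)
    (b : G.B) : ∀ (n : ℕ) (h : n < G.T),
      (∑ z ∈ Finset.Iic (⟨n, h⟩ : Fin G.T), (G.cin f b z - G.cout f b z))
        = G.chain f b ⟨n, h⟩ := by
  intro n
  induction n with
  | zero =>
    intro h
    have hIic : Finset.Iic (⟨0, h⟩ : Fin G.T) = {⟨0, h⟩} := by
      ext z
      simp only [Finset.mem_Iic, Finset.mem_singleton, Fin.le_def, Fin.ext_iff]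
      omega
    rw [hIic, Finset.sum_singleton]
    have := cons_zero G hc hf b ⟨0, h⟩ rfl
    linarith
  | succ n ih =>
    intro h
    have hn : n < G.T := by omega
    have hIic : Finset.Iic (⟨n + 1, h⟩ : Fin G.T)
        = insert (⟨n + 1, h⟩ : Fin G.T) (Finset.Iic ⟨n, hn⟩) := by
      ext z
      simp only [Finset.mem_Iic, Finset.mem_insert, Fin.le_def, Fin.ext_iff]
      omega
    rw [hIic, Finset.sum_insert (by simp [Fin.le_def])]
    rw [ih hn]
    have := cons_succ G hc hf b ⟨n, hn⟩ ⟨n + 1, h⟩ rfl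
    linarith

/-- total balance: over all time steps, charge equals discharge -/
lemma total_balance {c f : G.Node → G.Node → ℝ} (hc : G.GoodCap c) (hf : G.IsFlow c f)
    (b : G.B) : (∑ t, (G.cin f b t - G.cout f b t)) = 0 := by
  have hT : G.T - 1 < G.T := by have := G.T_pos; omega
  have huniv : Finset.Iic (⟨G.T - 1, hT⟩ : Fin G.T) = Finset.univ := by
    ext z
    simp only [Finset.mem_Iic, Finset.mem_univ, iff_true]
    rw [Fin.le_def]
    exact Nat.le_sub_one_of_lt z.isLt
  have h := prefix_eq_chain G hc hf b (G.T - 1) hT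
  rw [huniv] at h
  rw [h, chain, dif_neg (show ¬ (G.T - 1 + 1 < G.T) from by have := G.T_pos; omega)]

end ChargingGame
namespace ChargingGame

variable (G : ChargingGame)

lemma continuous_value : Continuous fun f : G.Node → G.Node → ℝ => G.value f := by
  unfold value
  exact continuous_finset_sum _ fun v _ => (continuous_apply v).comp (continuous_apply G.source)

lemma continuous_colsum (n : G.Node) :
    Continuous fun f : G.Node → G.Node → ℝ => ∑ u, f u n :=
  continuous_finset_sum _ fun u _ => (continuous_apply n).comp (continuous_apply u)

lemma continuous_rowsum (n : G.Node) :
    Continuous fun f : G.Node → G.Node → ℝ => ∑ w, f n w :=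
  continuous_finset_sum _ fun w _ => (continuous_apply w).comp (continuous_apply n)

lemma continuous_trans : Continuous fun f : G.Node → G.Node → ℝ => G.trans f := by
  unfold trans cin cout
  exact continuous_finset_sum _ fun b _ => continuous_finset_sum _ fun t _ =>
    (by fun_prop)

lemma isFlow_zero (c : G.Node → G.Node → ℝ) (hc : ∀ u v, 0 ≤ c u v) :
    G.IsFlow c (fun _ _ => 0) :=
  ⟨fun _ _ => le_refl 0, fun u v => hc u v, fun _ _ _ => by simp⟩

lemma isCompact_flowSet (c : G.Node → G.Node → ℝ) (hc : ∀ u v, 0 ≤ c u v) :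
    IsCompact {f : G.Node → G.Node → ℝ | G.IsFlow c f} := by
  have hK : IsCompact (Set.univ.pi fun u : G.Node => Set.univ.pi fun v => Set.Icc 0 (c u v)) :=
    isCompact_univ_pi fun u => isCompact_univ_pi fun v => isCompact_Icc
  have hC : IsClosed {f : G.Node → G.Node → ℝ |
      ∀ n, n ≠ G.source → n ≠ G.sink → (∑ u, f u n) = ∑ w, f n w} := by
    have he : {f : G.Node → G.Node → ℝ |
        ∀ n, n ≠ G.source → n ≠ G.sink → (∑ u, f u n) = ∑ w, f n w}
        = ⋂ (n) (_ : n ≠ G.source) (_ : n ≠ G.sink),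
            {f : G.Node → G.Node → ℝ | (∑ u, f u n) = ∑ w, f n w} := by
      ext f; simp only [Set.mem_setOf_eq, Set.mem_iInter]
    rw [he]
    exact isClosed_iInter fun n => isClosed_iInter fun _ => isClosed_iInter fun _ =>
      isClosed_eq (G.continuous_colsum n) (G.continuous_rowsum n)
  have heq : {f : G.Node → G.Node → ℝ | G.IsFlow c f}
      = (Set.univ.pi fun u : G.Node => Set.univ.pi fun v => Set.Icc 0 (c u v)) ∩
        {f : G.Node → G.Node → ℝ |
          ∀ n, n ≠ G.source → n ≠ G.sink → (∑ u, f u n) = ∑ w, f n w} := by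
    ext f
    simp only [Set.mem_setOf_eq, Set.mem_inter_iff, Set.mem_pi, Set.mem_univ,
      forall_const, Set.mem_Icc]
    constructor
    · rintro ⟨h1, h2, h3⟩
      exact ⟨fun u v => ⟨h1 u v, h2 u v⟩, h3⟩
    · rintro ⟨h1, h2⟩
      exact ⟨fun u v => (h1 u v).1, fun u v => (h1 u v).2, h2⟩
  rw [heq]
  exact hK.inter_right hC

/-- existence of a maximum flow -/
lemma exists_maxFlow (c : G.Node → G.Node → ℝ) (hc : ∀ u v, 0 ≤ c u v) :
    ∃ f, G.IsMaxFlow c f := by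
  obtain ⟨f, hfF, hfmax⟩ := (G.isCompact_flowSet c hc).exists_isMaxOn
    ⟨fun _ _ => 0, G.isFlow_zero c hc⟩ (G.continuous_value).continuousOn
  exact ⟨f, hfF, fun g hg => hfmax hg⟩

/-- existence of a maximum flow in the relaxed network minimizing transaction usage -/
lemma exists_opt : ∃ f₀, G.IsMaxFlow G.rcap f₀ ∧
    ∀ g, G.IsMaxFlow G.rcap g → G.trans f₀ ≤ G.trans g := by
  have hrc : ∀ u v, 0 ≤ G.rcap u v := (G.goodCap_rcap).nonneg
  obtain ⟨f₁, hf₁F, hf₁max⟩ := (G.isCompact_flowSet G.rcap hrc).exists_isMaxOn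
    ⟨fun _ _ => 0, G.isFlow_zero _ hrc⟩ (G.continuous_value).continuousOn
  have hS2c : IsCompact ({f : G.Node → G.Node → ℝ | G.IsFlow G.rcap f} ∩
      {f | G.value f₁ ≤ G.value f}) :=
    (G.isCompact_flowSet G.rcap hrc).inter_right
      (isClosed_le continuous_const G.continuous_value)
  obtain ⟨f₀, hf₀S, hf₀min⟩ := hS2c.exists_isMinOn ⟨f₁, hf₁F, show G.value f₁ ≤ G.value f₁ from le_refl _⟩
    (G.continuous_trans).continuousOn
  refine ⟨f₀, ⟨hf₀S.1, fun g hg => le_trans (hf₁max hg) hf₀S.2⟩, fun g hg => ?_⟩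
  exact hf₀min ⟨hg.1, hg.2 f₁ hf₁F⟩

lemma cap_nonneg (s : G.B → Fin G.T → ℝ) : ∀ u v, 0 ≤ G.cap s u v := (G.goodCap_cap s).nonneg

lemma cap_charge (s : G.B → Fin G.T → ℝ) (b : G.B) (t : Fin G.T) :
    G.cap s (G.gridNode t (G.loc b)) (G.batNode t b) = max 0 (s b t) := by
  simp [gridNode, batNode, cap]

lemma cap_discharge (s : G.B → Fin G.T → ℝ) (b : G.B) (t : Fin G.T) :
    G.cap s (G.batNode t b) (G.gridNode t (G.loc b)) = max 0 (-(s b t)) := by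
  simp [gridNode, batNode, cap]

/-- any flow w.r.t. a strategy-induced capacity has transaction flows at most `Mbig` -/
lemma flow_trans_bound {s : G.B → Fin G.T → ℝ} {f : G.Node → G.Node → ℝ}
    (hf : G.IsFlow (G.cap s) f) (b : G.B) (t : Fin G.T) :
    G.cin f b t ≤ G.Mbig ∧ G.cout f b t ≤ G.Mbig := by
  have hc := G.goodCap_cap s
  obtain ⟨pre, hpre0, hpreM, hins⟩ : ∃ p, 0 ≤ p ∧ p ≤ G.Mbig ∧
      (∑ u, f u (G.batNode t b)) = G.cin f b t + p := by
    by_cases h0 : (t : ℕ) = 0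
    · exact ⟨0, le_refl 0, G.Mbig_nonneg, by rw [into_sum_zero G hc hf b t h0, add_zero]⟩
    · have hlt : (t : ℕ) - 1 < G.T := by have := t.isLt; omega
      refine ⟨f (G.batNode ⟨(t : ℕ) - 1, hlt⟩ b) (G.batNode t b), hf.nonneg _ _, ?_,
        into_sum_succ G hc hf b ⟨(t : ℕ) - 1, hlt⟩ t (by simp; omega)⟩
      exact le_trans (le_trans (hf.le_cap _ _) (hc.chain_le _ t b)) (G.κB_le_Mbig b _)
  have hout := out_sum_chain G hc hf b t
  have hcons := hf.conserve _ (G.batNode_ne_source t b) (G.batNode_ne_sink t b)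
  have hchain0 := chain_nonneg G hf b t
  have hchainM : G.chain f b t ≤ G.Mbig :=
    le_trans (chain_le_κB G hc hf b t) (G.κB_le_Mbig b t)
  rw [hins, hout] at hcons
  by_cases hs : 0 ≤ s b t
  · have hco : G.cout f b t = 0 := by
      refine le_antisymm ?_ (hf.nonneg _ _)
      rw [cout]
      calc f (G.batNode t b) (G.gridNode t (G.loc b)) ≤ _ := hf.le_cap _ _
        _ = max 0 (-(s b t)) := G.cap_discharge s b t
        _ = 0 := max_eq_left (neg_nonpos.mpr hs)
    rw [hco] at hcons
    constructor <;> [linarith; linarith [G.Mbig_nonneg]]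
  · have hci : G.cin f b t = 0 := by
      refine le_antisymm ?_ (hf.nonneg _ _)
      rw [cin]
      calc f (G.gridNode t (G.loc b)) (G.batNode t b) ≤ _ := hf.le_cap _ _
        _ = max 0 (s b t) := G.cap_charge s b t
        _ = 0 := max_eq_left (le_of_not_ge hs)
    rw [hci] at hcons
    constructor <;> [linarith [G.Mbig_nonneg]; linarith]

/-- a flow w.r.t. any strategy-induced capacity is a flow in the relaxed network -/
lemma capFlow_rcapFlow {s : G.B → Fin G.T → ℝ} {f : G.Node → G.Node → ℝ}
    (hf : G.IsFlow (G.cap s) f) : G.IsFlow G.rcap f := by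
  refine ⟨hf.nonneg, ?_, hf.conserve⟩
  rintro (⟨t, v⟩ | ⟨⟨t, b⟩ | (_|_)⟩) (⟨t', v'⟩ | ⟨⟨t', b'⟩ | (_|_)⟩) <;>
    try { exact hf.le_cap _ _ }
  · -- charging transaction edge
    simp only [rcap]
    split_ifs with h
    · obtain ⟨h1, h2⟩ := h
      subst h1; subst h2
      exact (G.flow_trans_bound hf b' t).1
    · rw [G.flow_zero hf (show G.cap s _ _ = 0 by simp only [cap]; rw [if_neg h])]
  · -- discharging transaction edge
    simp only [rcap]
    split_ifs with h
    · obtain ⟨h1, h2⟩ := h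
      subst h1; subst h2
      exact (G.flow_trans_bound hf b t).2
    · rw [G.flow_zero hf (show G.cap s _ _ = 0 by simp only [cap]; rw [if_neg h])]

end ChargingGame
namespace ChargingGame

lemma sum_le_forall_eq {ι : Type*} {s : Finset ι} {a b : ι → ℝ} (h : ∀ i ∈ s, a i ≤ b i)
    (h2 : ∑ i ∈ s, b i ≤ ∑ i ∈ s, a i) : ∀ i ∈ s, a i = b i := by
  by_contra hc
  push_neg at hc
  obtain ⟨i, hi, hne⟩ := hc
  have : ∑ i ∈ s, a i < ∑ i ∈ s, b i :=
    Finset.sum_lt_sum h ⟨i, hi, lt_of_le_of_ne (h i hi) hne⟩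
  linarith

lemma sum_ite_and_left {α : Type*} [Fintype α] [DecidableEq α] (a : α) (P : Prop)
    [Decidable P] (m : ℝ) :
    (∑ u, if u = a ∧ P then m else 0) = if P then m else 0 := by
  by_cases hP : P <;> simp [hP]

lemma sum_ite_and_right {α : Type*} [Fintype α] [DecidableEq α] (a : α) (P : Prop)
    [Decidable P] (m : ℝ) :
    (∑ u, if P ∧ u = a then m else 0) = if P then m else 0 := by
  by_cases hP : P <;> simp [hP]

variable (G : ChargingGame)

lemma source_ne_gridNode (t : Fin G.T) (v : G.V) : G.source ≠ G.gridNode t v := by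
  simp [source, gridNode]

lemma source_ne_batNode (t : Fin G.T) (b : G.B) : G.source ≠ G.batNode t b := by
  simp [source, batNode]

lemma opt_min_zero {f₀ : G.Node → G.Node → ℝ} (hopt : G.IsMaxFlow G.rcap f₀)
    (hmin : ∀ g, G.IsMaxFlow G.rcap g → G.trans f₀ ≤ G.trans g) (b : G.B) (t : Fin G.T) :
    G.cin f₀ b t = 0 ∨ G.cout f₀ b t = 0 := by
  by_contra hc
  push_neg at hc
  have hf := hopt.1
  set gn := G.gridNode t (G.loc b) with hgn
  set bn := G.batNode t b with hbn
  have hne : gn ≠ bn := G.gridNode_ne_batNode t t (G.loc b) b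
  set m := min (G.cin f₀ b t) (G.cout f₀ b t) with hm
  have hm0 : 0 < m :=
    lt_min (lt_of_le_of_ne (hf.nonneg _ _) (Ne.symm hc.1))
      (lt_of_le_of_ne (hf.nonneg _ _) (Ne.symm hc.2))
  have hmcin : m ≤ G.cin f₀ b t := min_le_left _ _
  have hmcout : m ≤ G.cout f₀ b t := min_le_right _ _
  set f' : G.Node → G.Node → ℝ := fun u w =>
    f₀ u w - (if u = gn ∧ w = bn then m else 0) - (if u = bn ∧ w = gn then m else 0)
    with hf'def
  have hcol : ∀ n, (∑ u, f' u n)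
      = (∑ u, f₀ u n) - (if n = bn then m else 0) - (if n = gn then m else 0) := by
    intro n
    simp only [hf'def, Finset.sum_sub_distrib]
    rw [sum_ite_and_left gn (n = bn) m, sum_ite_and_left bn (n = gn) m]
  have hrow : ∀ n, (∑ w, f' n w)
      = (∑ w, f₀ n w) - (if n = gn then m else 0) - (if n = bn then m else 0) := by
    intro n
    simp only [hf'def, Finset.sum_sub_distrib]
    rw [sum_ite_and_right bn (n = gn) m, sum_ite_and_right gn (n = bn) m]
  have hflow' : G.IsFlow G.rcap f' := by
    refine ⟨?_, ?_, ?_⟩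
    · intro u w
      simp only [hf'def]
      split_ifs with h1 h2 h2
      · exact absurd (h1.1 ▸ h2.1) hne
      · obtain ⟨hu, hw⟩ := h1; subst hu; subst hw
        have : f₀ gn bn = G.cin f₀ b t := rfl
        linarith
      · obtain ⟨hu, hw⟩ := h2; subst hu; subst hw
        have : f₀ bn gn = G.cout f₀ b t := rfl
        linarith
      · linarith [hf.nonneg u w]
    · intro u w
      have := hf.le_cap u w
      simp only [hf'def]
      split_ifs <;> linarith
    · intro n hn1 hn2
      rw [hcol n, hrow n, hf.conserve n hn1 hn2]
      ring
  have hval : G.value f' = G.value f₀ := by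
    unfold value
    rw [hrow G.source, if_neg (hgn ▸ G.source_ne_gridNode t (G.loc b)),
      if_neg (hbn ▸ G.source_ne_batNode t b)]
    ring
  have hmax' : G.IsMaxFlow G.rcap f' :=
    ⟨hflow', fun g hg => hval ▸ hopt.2 g hg⟩
  have hcin' : ∀ (b' : G.B) (t' : Fin G.T),
      G.cin f' b' t' = G.cin f₀ b' t' - (if b' = b ∧ t' = t then m else 0) := by
    intro b' t'
    by_cases h : b' = b ∧ t' = t
    · obtain ⟨h1, h2⟩ := h
      have e1 : G.gridNode t' (G.loc b') = gn := by rw [h1, h2, hgn]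
      have e2 : G.batNode t' b' = bn := by rw [h1, h2, hbn]
      simp only [cin, hf'def, e1, e2, if_pos (⟨rfl, rfl⟩ : gn = gn ∧ bn = bn),
        if_neg (fun hh : gn = bn ∧ bn = gn => hne hh.1), if_pos (⟨h1, h2⟩ : b' = b ∧ t' = t)]
      simp
    · have hb : G.batNode t' b' ≠ bn := fun hh =>
        h ⟨(G.batNode_inj (hh.trans hbn)).2, (G.batNode_inj (hh.trans hbn)).1⟩
      simp only [cin, hf'def,
        if_neg (fun hh : G.gridNode t' (G.loc b') = gn ∧ G.batNode t' b' = bn => hb hh.2),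
        if_neg (fun hh : G.gridNode t' (G.loc b') = bn ∧ G.batNode t' b' = gn =>
          (G.gridNode_ne_batNode t' t (G.loc b') b) (hh.1.trans hbn)), if_neg h]
      simp
  have hcout' : ∀ (b' : G.B) (t' : Fin G.T),
      G.cout f' b' t' = G.cout f₀ b' t' - (if b' = b ∧ t' = t then m else 0) := by
    intro b' t'
    by_cases h : b' = b ∧ t' = t
    · obtain ⟨h1, h2⟩ := h
      have e1 : G.gridNode t' (G.loc b') = gn := by rw [h1, h2, hgn]
      have e2 : G.batNode t' b' = bn := by rw [h1, h2, hbn]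
      simp only [cout, hf'def, e1, e2,
        if_neg (fun hh : bn = gn ∧ gn = bn => hne hh.1.symm),
        if_pos (⟨rfl, rfl⟩ : bn = bn ∧ gn = gn), if_pos (⟨h1, h2⟩ : b' = b ∧ t' = t)]
      simp
    · have hb : G.batNode t' b' ≠ bn := fun hh =>
        h ⟨(G.batNode_inj (hh.trans hbn)).2, (G.batNode_inj (hh.trans hbn)).1⟩
      simp only [cout, hf'def,
        if_neg (fun hh : G.batNode t' b' = gn ∧ G.gridNode t' (G.loc b') = bn =>
          (G.gridNode_ne_batNode t' t (G.loc b') b) (hh.2.trans hbn)),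
        if_neg (fun hh : G.batNode t' b' = bn ∧ G.gridNode t' (G.loc b') = gn => hb hh.1),
        if_neg h]
      simp
  have htrans : G.trans f' = G.trans f₀ - 2 * m := by
    unfold trans
    have key : ∀ b' : G.B, (∑ t', (G.cin f' b' t' + G.cout f' b' t'))
        = (∑ t', (G.cin f₀ b' t' + G.cout f₀ b' t')) - (if b' = b then 2 * m else 0) := by
      intro b'
      by_cases hb' : b' = b
      · simp only [hcin', hcout', if_pos hb']
        have h1 : (∑ t', if b' = b ∧ t' = t then m else 0) = m := by
          rw [sum_ite_and_right t (b' = b) m, if_pos hb']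
        calc (∑ t', (G.cin f₀ b' t' - (if b' = b ∧ t' = t then m else 0)
                + (G.cout f₀ b' t' - (if b' = b ∧ t' = t then m else 0))))
            = (∑ t', (G.cin f₀ b' t' + G.cout f₀ b' t'))
              - (∑ t', if b' = b ∧ t' = t then m else 0)
              - (∑ t', if b' = b ∧ t' = t then m else 0) := by
              rw [← Finset.sum_sub_distrib, ← Finset.sum_sub_distrib]
              exact Finset.sum_congr rfl fun t' _ => by ring
          _ = _ := by rw [h1]; ring
      · simp only [hcin', hcout', if_neg hb']
        have h0 : ∀ t' : Fin G.T, (if b' = b ∧ t' = t then m else 0) = 0 := by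
          intro t'; rw [if_neg (fun hh => hb' hh.1)]
        simp only [h0, sub_zero]
    simp only [key, Finset.sum_sub_distrib]
    rw [Finset.sum_ite_eq' Finset.univ b (fun _ => 2 * m)]
    simp
  have := hmin f' hmax'
  rw [htrans] at this
  linarith

end ChargingGame

/-- For any instance of the charging game and any uniform price profile,
there exists a Nash equilibrium whose welfare equals the maximum welfare over all
strategy profiles; i.e. the price of stability for uniform prices (and hence for the
whole charging game) is `1`. -/
theorem uniform_prices_pos_one (G : ChargingGame) (c : ℝ) :
    ∃ s : G.B → Fin G.T → ℝ, G.IsNash (fun _ => c) s ∧ G.welfare s = G.optWelfare := by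
  classical
  obtain ⟨f₀, hopt, hmin⟩ := G.exists_opt
  have hminz := G.opt_min_zero hopt hmin
  set s : G.B → Fin G.T → ℝ := fun b t => G.cin f₀ b t - G.cout f₀ b t with hs
  have hnn_in : ∀ b t, 0 ≤ G.cin f₀ b t := fun b t => hopt.1.nonneg _ _
  have hnn_out : ∀ b t, 0 ≤ G.cout f₀ b t := fun b t => hopt.1.nonneg _ _
  have hmax1 : ∀ b t, max 0 (s b t) = G.cin f₀ b t := by
    intro b t
    rcases hminz b t with h | h
    · rw [hs]; show max 0 (G.cin f₀ b t - G.cout f₀ b t) = G.cin f₀ b t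
      rw [h, zero_sub, max_eq_left (neg_nonpos.mpr (hnn_out b t))]
    · rw [hs]; show max 0 (G.cin f₀ b t - G.cout f₀ b t) = G.cin f₀ b t
      rw [h, sub_zero, max_eq_right (hnn_in b t)]
  have hmax2 : ∀ b t, max 0 (-(s b t)) = G.cout f₀ b t := by
    intro b t
    rcases hminz b t with h | h
    · rw [hs]; show max 0 (-(G.cin f₀ b t - G.cout f₀ b t)) = G.cout f₀ b t
      rw [h, zero_sub, neg_neg, max_eq_right (hnn_out b t)]
    · rw [hs]; show max 0 (-(G.cin f₀ b t - G.cout f₀ b t)) = G.cout f₀ b t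
      rw [h, sub_zero, max_eq_left (neg_nonpos.mpr (hnn_in b t))]
  have hcs_charge : ∀ b t, G.cap s (G.gridNode t (G.loc b)) (G.batNode t b) = G.cin f₀ b t :=
    fun b t => by rw [G.cap_charge s b t, hmax1]
  have hcs_dis : ∀ b t, G.cap s (G.batNode t b) (G.gridNode t (G.loc b)) = G.cout f₀ b t :=
    fun b t => by rw [G.cap_discharge s b t, hmax2]
  -- f₀ is a feasible flow for the strategy-induced capacities
  have hflow_s : G.IsFlow (G.cap s) f₀ := by
    refine ⟨hopt.1.nonneg, ?_, hopt.1.conserve⟩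
    rintro (⟨t, v⟩ | ⟨⟨t, b⟩ | (_|_)⟩) (⟨t', v'⟩ | ⟨⟨t', b'⟩ | (_|_)⟩) <;>
      try { exact hopt.1.le_cap _ _ }
    · simp only [ChargingGame.cap]
      split_ifs with h
      · obtain ⟨h1, h2⟩ := h
        subst h1; subst h2
        rw [hmax1]
        exact le_refl _
      · rw [G.flow_zero hopt.1 (show G.rcap _ _ = 0 by simp only [ChargingGame.rcap]; rw [if_neg h])]
    · simp only [ChargingGame.cap]
      split_ifs with h
      · obtain ⟨h1, h2⟩ := h
        subst h1; subst h2
        rw [hmax2]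
        exact le_refl _
      · rw [G.flow_zero hopt.1 (show G.rcap _ _ = 0 by simp only [ChargingGame.rcap]; rw [if_neg h])]
  -- every agent's strategy is admissible
  have hAdm : ∀ b, G.Admissible s b := by
    intro b g hg t
    have hgr : G.IsFlow G.rcap g := G.capFlow_rcapFlow hg.1
    have hval_ge : G.value f₀ ≤ G.value g := hg.2 f₀ hflow_s
    have hgmax : G.IsMaxFlow G.rcap g := ⟨hgr, fun h hh => le_trans (hopt.2 h hh) hval_ge⟩
    have htr : G.trans f₀ ≤ G.trans g := hmin g hgmax
    have hterm : ∀ (b' : G.B) (t' : Fin G.T),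
        G.cin g b' t' ≤ G.cin f₀ b' t' ∧ G.cout g b' t' ≤ G.cout f₀ b' t' := by
      intro b' t'
      exact ⟨le_trans (hg.1.le_cap _ _) (le_of_eq (hcs_charge b' t')),
        le_trans (hg.1.le_cap _ _) (le_of_eq (hcs_dis b' t'))⟩
    have houter : ∀ b' ∈ (Finset.univ : Finset G.B),
        (∑ t', (G.cin g b' t' + G.cout g b' t'))
          = ∑ t', (G.cin f₀ b' t' + G.cout f₀ b' t') := by
      refine ChargingGame.sum_le_forall_eq (fun b' _ => ?_) htr
      exact Finset.sum_le_sum fun t' _ =>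
        add_le_add (hterm b' t').1 (hterm b' t').2
    have hinner : ∀ t' ∈ (Finset.univ : Finset (Fin G.T)),
        G.cin g b t' + G.cout g b t' = G.cin f₀ b t' + G.cout f₀ b t' :=
      ChargingGame.sum_le_forall_eq
        (fun t' _ => add_le_add (hterm b t').1 (hterm b t').2)
        (le_of_eq (houter b (Finset.mem_univ b)).symm)
    have hkey := hinner t (Finset.mem_univ t)
    have h1 := (hterm b t).1
    have h2 := (hterm b t).2
    constructor
    · rw [hcs_charge b t]
      show G.cin g b t = G.cin f₀ b t
      linarith
    · rw [hcs_dis b t]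
      show G.cout g b t = G.cout f₀ b t
      linarith
  -- validity of the profile
  have hvalid : G.ValidProfile s := by
    intro b t ht
    have hpre := ChargingGame.prefix_eq_chain G G.goodCap_rcap hopt.1 b (t : ℕ) t.isLt
    have heta : (⟨(t : ℕ), t.isLt⟩ : Fin G.T) = t := Fin.ext rfl
    rw [heta] at hpre
    have hbody : (∑ z ∈ Finset.Iic t, s b z)
        = ∑ z ∈ Finset.Iic t, (G.cin f₀ b z - G.cout f₀ b z) := rfl
    rw [hbody, hpre]
    exact ⟨ChargingGame.chain_nonneg G hopt.1 b t, ChargingGame.chain_le_κB G G.goodCap_rcap hopt.1 b t⟩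
  -- total balance of the constructed strategies
  have hsum0 : ∀ b, (∑ t, s b t) = 0 := by
    intro b
    have := ChargingGame.total_balance G G.goodCap_rcap hopt.1 b
    exact this
  -- welfare of s
  have hub : ∀ r ∈ {r | ∃ f, G.IsFlow (G.cap s) f ∧ G.value f = r}, r ≤ G.value f₀ := by
    rintro r ⟨g, hg, rfl⟩
    exact hopt.2 g (G.capFlow_rcapFlow hg)
  have hmem : G.value f₀ ∈ {r | ∃ f, G.IsFlow (G.cap s) f ∧ G.value f = r} := ⟨f₀, hflow_s, rfl⟩
  have hwel : G.welfare s = G.value f₀ :=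
    le_antisymm (csSup_le ⟨_, hmem⟩ hub) (le_csSup ⟨_, hub⟩ hmem)
  -- welfare of arbitrary profiles is bounded
  have hwub : ∀ s' : G.B → Fin G.T → ℝ, G.welfare s' ≤ G.value f₀ := by
    intro s'
    refine csSup_le ⟨G.value (fun _ _ => 0), fun _ _ => 0,
      G.isFlow_zero _ (G.cap_nonneg s'), rfl⟩ ?_
    rintro r ⟨g, hg, rfl⟩
    exact hopt.2 g (G.capFlow_rcapFlow hg)
  have hopteq : G.optWelfare = G.value f₀ := by
    refine le_antisymm (csSup_le ⟨G.welfare s, s, hvalid, rfl⟩ ?_)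
      (le_csSup ⟨G.value f₀, ?_⟩ ⟨s, hvalid, hwel⟩)
    · rintro r ⟨s', _, rfl⟩
      exact hwub s'
    · rintro r ⟨s', _, rfl⟩
      exact hwub s'
  refine ⟨s, ⟨hvalid, ?_⟩, by rw [hwel, hopteq]⟩
  intro b sb' hsb' hlt
  have hu1 : G.utility (fun _ => c) s b = ((0 : ℝ) : EReal) := by
    unfold ChargingGame.utility
    rw [if_pos (hAdm b)]
    congr 1
    rw [← Finset.sum_mul, hsum0 b, zero_mul, neg_zero]
  by_cases hadm' : G.Admissible (Function.update s b sb') b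
  · have hsum' : (∑ t, sb' t) = 0 := by
      obtain ⟨g, hg⟩ := G.exists_maxFlow (G.cap (Function.update s b sb'))
        (G.cap_nonneg _)
      have hbal := ChargingGame.total_balance G (G.goodCap_cap (Function.update s b sb')) hg.1 b
      have hsat := hadm' g hg
      have hterm : ∀ t, G.cin g b t - G.cout g b t = sb' t := by
        intro t
        have h1 := (hsat t).1
        have h2 := (hsat t).2
        rw [G.cap_charge] at h1
        rw [G.cap_discharge] at h2
        rw [Function.update_self] at h1 h2
        rw [ChargingGame.cin, ChargingGame.cout] at *
        rw [h1, h2, max_comm, max_comm 0 (-(sb' t))]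
        exact max_zero_sub_max_neg_zero_eq_self _
      rw [← Finset.sum_congr rfl fun t _ => hterm t]
      exact hbal
    have hu2 : G.utility (fun _ => c) (Function.update s b sb') b = ((0 : ℝ) : EReal) := by
      unfold ChargingGame.utility
      rw [if_pos hadm']
      congr 1
      rw [Function.update_self, ← Finset.sum_mul, hsum', zero_mul, neg_zero]
    rw [hu1, hu2] at hlt
    exact lt_irrefl _ hlt
  · have hu2 : G.utility (fun _ => c) (Function.update s b sb') b = ⊥ := by
      unfold ChargingGame.utility
      rw [if_neg hadm']
    rw [hu2] at hlt
    exact not_lt_bot hlt
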